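/- Assume 𝒢 is connected and let λ_N = max_{f ∈ 𝒮_p} ℛ(f) be the largest variational eigenvalue of ℋ_p. Then 𝒢 is bipartite if and only if there exists an eigenfunction of ℋ_p associated with λ_N that induces exactly N nodal domains. -/

import Mathlib

noncomputable section

open Finset

/-- `φ_p(x) = |x|^{p-2} x` (real exponent, `φ_p(0) = 0`). -/
def phiP (p x : ℝ) : ℝ := |x| ^ (p - 2) * x

/-- The generalized `p`-Laplacian `ℋ_p`.  The edge-weight function `ω` is assumed to be
symmetric and to vanish on pairs of non-adjacent vertices, so the sum over all vertices
is the sum over the neighbours of `u`. -/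
def genLap {V : Type*} [Fintype V] (ω : V → V → ℝ) (κ : V → ℝ) (p : ℝ)
    (f : V → ℝ) (u : V) : ℝ :=
  (∑ v : V, ω u v * phiP p (f u - f v)) + κ u * phiP p (f u)

/-- `(lam, f)` is an eigenpair of `ℋ_p`. -/
def IsEigenpair {V : Type*} [Fintype V] (ω : V → V → ℝ) (κ ϱ : V → ℝ) (p lam : ℝ)
    (f : V → ℝ) : Prop :=
  f ≠ 0 ∧ ∀ u, genLap ω κ p f u = lam * (ϱ u * phiP p (f u))

/-- The Rayleigh quotient `ℛ` of `ℋ_p` (each edge `uv` is counted once: the double sum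
counts it twice, whence the factor `1/2`). -/
def rayleigh {V : Type*} [Fintype V] (ω : V → V → ℝ) (κ ϱ : V → ℝ) (p : ℝ)
    (f : V → ℝ) : ℝ :=
  ((1 / 2) * ∑ u : V, ∑ v : V, ω u v * |f u - f v| ^ p + ∑ u : V, κ u * |f u| ^ p) /
    ∑ u : V, ϱ u * |f u| ^ p

/-- The `p`-sphere `𝒮_p`. -/
def pSphere (V : Type*) [Fintype V] (p : ℝ) : Set (V → ℝ) := {f | ∑ u : V, |f u| ^ p = 1}

/-- The Krasnoselskii genus of a (symmetric) subset of `ℝ^V`. -/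
def krasGenus {V : Type*} [Fintype V] (A : Set (V → ℝ)) : ℕ∞ :=
  sInf {n : ℕ∞ | ∃ k : ℕ, n = (k : ℕ∞) ∧ ∃ φ : (V → ℝ) → (Fin k → ℝ),
    ContinuousOn φ A ∧ (∀ x ∈ A, φ (-x) = -φ x) ∧ ∀ x ∈ A, φ x ≠ 0}

/-- The `k`-th variational eigenvalue of `ℋ_p`: the min over closed symmetric subsets of the
`p`-sphere of genus at least `k` of the max of the Rayleigh quotient. -/
def varEig {V : Type*} [Fintype V] (ω : V → V → ℝ) (κ ϱ : V → ℝ) (p : ℝ) (k : ℕ) : ℝ :=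
  sInf {r : ℝ | ∃ A : Set (V → ℝ), A ⊆ pSphere V p ∧ IsClosed A ∧ (∀ f ∈ A, -f ∈ A) ∧
    (k : ℕ∞) ≤ krasGenus A ∧ IsGreatest (rayleigh ω κ ϱ p '' A) r}

/-- The subgraph `𝒢₊(f)`: vertices where `f ≠ 0`, edges where `f` has equal nonzero signs. -/
def posGraph {V : Type*} (G : SimpleGraph V) (f : V → ℝ) : SimpleGraph V where
  Adj u v := G.Adj u v ∧ 0 < f u * f v
  symm := by
    constructor
    intro u v h
    exact ⟨h.1.symm, by rw [mul_comm]; exact h.2⟩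
  loopless := ⟨fun u h => G.loopless.irrefl u h.1⟩

/-- The number `ν(f)` of (strong) nodal domains of `f`: the number of connected components of
`𝒢₊(f)` consisting of vertices where `f` is nonzero. -/
def nodalCount {V : Type*} (G : SimpleGraph V) (f : V → ℝ) : ℕ :=
  {c : (posGraph G f).ConnectedComponent |
    ∀ u, (posGraph G f).connectedComponentMk u = c → f u ≠ 0}.ncard

/-- The subgraph of edges on which `f` changes sign. -/
def negGraph {V : Type*} (G : SimpleGraph V) (f : V → ℝ) : SimpleGraph V where
  Adj u v := G.Adj u v ∧ f u * f v < 0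
  symm := by
    constructor
    intro u v h
    exact ⟨h.1.symm, by rw [mul_comm]; exact h.2⟩
  loopless := ⟨fun u h => G.loopless.irrefl u h.1⟩

/-- `ζ(f)`: the number of edges on which `f` changes sign. -/
def zetaCount {V : Type*} [Fintype V] (G : SimpleGraph V) (f : V → ℝ) : ℕ :=
  (negGraph G f).edgeSet.ncard

/-- `z(f)`: the number of vertices where `f` vanishes. -/
def zeroCount {V : Type*} [Fintype V] (f : V → ℝ) : ℕ := {u : V | f u = 0}.ncard

/-- `l(f)`: the number of independent loops (cycle rank) of `𝒢₊(f)`,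
`|E(𝒢₊(f))| − |V(𝒢₊(f))| + ν(f)`. -/
def loopCount {V : Type*} [Fintype V] (G : SimpleGraph V) (f : V → ℝ) : ℤ :=
  ((posGraph G f).edgeSet.ncard : ℤ) - ({u : V | f u ≠ 0}.ncard : ℤ) + (nodalCount G f : ℤ)

/-- The subgraph `𝒢'(f)` of `𝒢` induced on the support of `f` (vertices with `f = 0` are
deleted together with all incident edges; in this encoding they are kept as isolated
vertices, which are discarded in the counts below). -/
def suppGraph {V : Type*} (G : SimpleGraph V) (f : V → ℝ) : SimpleGraph V where
  Adj u v := G.Adj u v ∧ f u ≠ 0 ∧ f v ≠ 0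
  symm := by
    constructor
    intro u v h
    exact ⟨h.1.symm, h.2.2, h.2.1⟩
  loopless := ⟨fun u h => G.loopless.irrefl u h.1⟩

/-- `c(f)`: the number of connected components of `𝒢'(f)`. -/
def compCount {V : Type*} (G : SimpleGraph V) (f : V → ℝ) : ℕ :=
  {c : (suppGraph G f).ConnectedComponent |
    ∀ u, (suppGraph G f).connectedComponentMk u = c → f u ≠ 0}.ncard

/-- `β'(f)`: the number of independent loops of `𝒢'(f)`,
`|E(𝒢'(f))| − |V(𝒢'(f))| + c(f)`. -/
def betaSupp {V : Type*} [Fintype V] (G : SimpleGraph V) (f : V → ℝ) : ℤ :=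
  ((suppGraph G f).edgeSet.ncard : ℤ) - ({u : V | f u ≠ 0}.ncard : ℤ) + (compCount G f : ℤ)

/-! If `σ = ±1` flips sign across every edge, then `σ|f|` has the same mass and potential term
as `f` and at least its edge energy, since `|σ_u|f_u| - σ_v|f_v|| = |f_u| + |f_v|` on an edge;
so `σ|f|` maximizes `ℛ` whenever `f` does, and the first-order condition makes it an
eigenfunction for `λ_N`. At a zero `a` of this eigenfunction the equation reduces to
`∑_v ω_av φ_p(|f_v|) = 0`, a sum of nonnegative terms, so zeros spread along edges and, the graph
being connected, `σ|f|` vanishes nowhere. It then alternates in sign along every edge, and every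
vertex is its own nodal domain. Conversely, `N` nodal domains force `f` to change sign across
every edge, and `{f > 0}` is one side of a bipartition. -/

theorem phiP_zero (p : ℝ) : phiP p 0 = 0 := by simp [phiP]

theorem phiP_neg (p x : ℝ) : phiP p (-x) = -phiP p x := by simp [phiP]

theorem phiP_mul_of_abs_eq_one (p : ℝ) {c : ℝ} (hc : |c| = 1) (x : ℝ) :
    phiP p (c * x) = c * phiP p x := by
  simp only [phiP, abs_mul, hc, one_mul]; ring

theorem phiP_nonneg (p : ℝ) {x : ℝ} (hx : 0 ≤ x) : 0 ≤ phiP p x :=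
  mul_nonneg (Real.rpow_nonneg (abs_nonneg x) _) hx

theorem phiP_eq_zero_iff {p x : ℝ} : phiP p x = 0 ↔ x = 0 := by
  refine ⟨fun h => ?_, fun h => h ▸ phiP_zero p⟩
  by_contra hx
  exact mul_ne_zero (Real.rpow_pos_of_pos (abs_pos.mpr hx) _).ne' hx h

theorem hasDerivAt_abs_add_mul_rpow {p : ℝ} (hp : 1 < p) (a c : ℝ) :
    HasDerivAt (fun t : ℝ => |a + t * c| ^ p) (p * phiP p a * c) 0 := by
  have hline : HasDerivAt (fun t : ℝ => a + t * c) c 0 := by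
    simpa using ((hasDerivAt_id (0 : ℝ)).mul_const c).const_add a
  have h := (hasDerivAt_abs_rpow a hp).comp_of_eq (0 : ℝ) hline (by simp)
  exact h.congr_deriv (by simp only [phiP]; ring)

theorem abs_mul_rpow {p : ℝ} (c x : ℝ) : |c * x| ^ p = |c| ^ p * |x| ^ p := by
  rw [abs_mul, Real.mul_rpow (abs_nonneg c) (abs_nonneg x)]

section Rayleigh

variable {V : Type*} [Fintype V]

def pEnergy (ω : V → V → ℝ) (κ : V → ℝ) (p : ℝ) (f : V → ℝ) : ℝ :=
  (1 / 2) * ∑ u : V, ∑ v : V, ω u v * |f u - f v| ^ p + ∑ u : V, κ u * |f u| ^ p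

def pMass (ϱ : V → ℝ) (p : ℝ) (f : V → ℝ) : ℝ := ∑ u : V, ϱ u * |f u| ^ p

theorem rayleigh_eq_div (ω : V → V → ℝ) (κ ϱ : V → ℝ) (p : ℝ) (f : V → ℝ) :
    rayleigh ω κ ϱ p f = pEnergy ω κ p f / pMass ϱ p f := rfl

theorem pEnergy_smul (ω : V → V → ℝ) (κ : V → ℝ) (p c : ℝ) (f : V → ℝ) :
    pEnergy ω κ p (c • f) = |c| ^ p * pEnergy ω κ p f := by
  simp only [pEnergy, Pi.smul_apply, smul_eq_mul, ← mul_sub, abs_mul_rpow,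
    mul_left_comm _ (|c| ^ p), ← Finset.mul_sum]
  ring

theorem pMass_smul (ϱ : V → ℝ) (p c : ℝ) (f : V → ℝ) :
    pMass ϱ p (c • f) = |c| ^ p * pMass ϱ p f := by
  simp only [pMass, Pi.smul_apply, smul_eq_mul, abs_mul_rpow, mul_left_comm _ (|c| ^ p),
    ← Finset.mul_sum]

theorem rayleigh_smul (ω : V → V → ℝ) (κ ϱ : V → ℝ) (p : ℝ) {c : ℝ} (hc : c ≠ 0)
    (f : V → ℝ) : rayleigh ω κ ϱ p (c • f) = rayleigh ω κ ϱ p f := by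
  rw [rayleigh_eq_div, rayleigh_eq_div, pEnergy_smul, pMass_smul,
    mul_div_mul_left _ _ (Real.rpow_pos_of_pos (abs_pos.mpr hc) p).ne']

theorem pMass_pos {ϱ : V → ℝ} (hϱ : ∀ u, 0 < ϱ u) (p : ℝ) {f : V → ℝ} (hf : f ≠ 0) :
    0 < pMass ϱ p f := by
  obtain ⟨u, hu⟩ := Function.ne_iff.mp hf
  exact Finset.sum_pos' (fun v _ => mul_nonneg (hϱ v).le (Real.rpow_nonneg (abs_nonneg _) _))
    ⟨u, Finset.mem_univ u, mul_pos (hϱ u) (Real.rpow_pos_of_pos (abs_pos.mpr hu) _)⟩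

theorem exists_pos_smul_mem_pSphere {p : ℝ} (hp : 0 < p) {f : V → ℝ} (hf : f ≠ 0) :
    ∃ c : ℝ, 0 < c ∧ c • f ∈ pSphere V p := by
  have hs : 0 < ∑ u, |f u| ^ p := by
    simpa [pMass] using pMass_pos (fun _ => one_pos) p hf
  refine ⟨(∑ u, |f u| ^ p) ^ (-p⁻¹), Real.rpow_pos_of_pos hs _, ?_⟩
  have h := pMass_smul (fun _ => (1 : ℝ)) p ((∑ u, |f u| ^ p) ^ (-p⁻¹)) f
  simp only [pMass, one_mul] at h
  rw [pSphere, Set.mem_ofPred_eq, h, abs_of_pos (Real.rpow_pos_of_pos hs _),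
    ← Real.rpow_mul hs.le, neg_mul, inv_mul_cancel₀ hp.ne', Real.rpow_neg_one,
    inv_mul_cancel₀ hs.ne']

theorem rayleigh_le_of_isGreatest {ω : V → V → ℝ} {κ ϱ : V → ℝ} {p lam : ℝ} (hp : 0 < p)
    (hlam : IsGreatest (rayleigh ω κ ϱ p '' pSphere V p) lam) {f : V → ℝ} (hf : f ≠ 0) :
    rayleigh ω κ ϱ p f ≤ lam := by
  obtain ⟨c, hc, hcf⟩ := exists_pos_smul_mem_pSphere hp hf
  rw [← rayleigh_smul ω κ ϱ p hc.ne' f]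
  exact hlam.2 ⟨c • f, hcf, rfl⟩

theorem ne_zero_of_mem_pSphere {p : ℝ} (hp : 0 < p) {f : V → ℝ} (hf : f ∈ pSphere V p) :
    f ≠ 0 := by
  rintro rfl
  simp [pSphere, Real.zero_rpow hp.ne'] at hf

end Rayleigh

section FirstVariation

variable {V : Type*} [Fintype V]

theorem sum_sum_mul_phiP_sub_mul_sub {ω : V → V → ℝ} (hω : ∀ u v, ω u v = ω v u) (p : ℝ)
    (f e : V → ℝ) :
    ∑ u, ∑ v, ω u v * phiP p (f u - f v) * (e u - e v) =
      2 * ∑ u, (∑ v, ω u v * phiP p (f u - f v)) * e u := by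
  have hswap : ∑ u, ∑ v, ω u v * phiP p (f u - f v) * e v =
      -∑ u, (∑ v, ω u v * phiP p (f u - f v)) * e u := by
    rw [Finset.sum_comm]
    simp only [Finset.sum_mul, ← Finset.sum_neg_distrib]
    refine Finset.sum_congr rfl fun u _ => Finset.sum_congr rfl fun v _ => ?_
    rw [hω, ← neg_sub, phiP_neg]
    ring
  simp only [mul_sub, Finset.sum_sub_distrib, hswap, Finset.sum_mul]
  ring

theorem hasDerivAt_pMass (ϱ : V → ℝ) {p : ℝ} (hp : 1 < p) (g e : V → ℝ) :
    HasDerivAt (fun t : ℝ => pMass ϱ p (g + t • e)) (p * ∑ u, ϱ u * phiP p (g u) * e u) 0 := by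
  have h := HasDerivAt.fun_sum (u := Finset.univ) fun u _ =>
    (hasDerivAt_abs_add_mul_rpow hp (g u) (e u)).const_mul (ϱ u)
  have hfun : (fun t : ℝ => pMass ϱ p (g + t • e)) = fun t => ∑ u, ϱ u * |g u + t * e u| ^ p := by
    ext t; simp [pMass]
  rw [hfun, Finset.mul_sum]
  exact h.congr_deriv (Finset.sum_congr rfl fun u _ => by ring)

theorem hasDerivAt_pEnergy {ω : V → V → ℝ} (hω : ∀ u v, ω u v = ω v u) (κ : V → ℝ) {p : ℝ}
    (hp : 1 < p) (g e : V → ℝ) :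
    HasDerivAt (fun t : ℝ => pEnergy ω κ p (g + t • e))
      (p * ∑ u, genLap ω κ p g u * e u) 0 := by
  have hedge := (HasDerivAt.fun_sum (u := Finset.univ) fun u _ =>
    HasDerivAt.fun_sum (u := Finset.univ) fun v _ =>
      (hasDerivAt_abs_add_mul_rpow hp (g u - g v) (e u - e v)).const_mul (ω u v)).const_mul
    (1 / 2 : ℝ)
  have hpot := HasDerivAt.fun_sum (u := Finset.univ) fun u _ =>
    (hasDerivAt_abs_add_mul_rpow hp (g u) (e u)).const_mul (κ u)
  have hfun : (fun t : ℝ => pEnergy ω κ p (g + t • e)) = fun t =>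
      1 / 2 * ∑ u, ∑ v, ω u v * |g u - g v + t * (e u - e v)| ^ p +
        ∑ u, κ u * |g u + t * e u| ^ p := by
    ext t
    simp only [pEnergy, Pi.add_apply, Pi.smul_apply, smul_eq_mul, add_sub_add_comm, ← mul_sub]
  rw [hfun]
  refine (hedge.add hpot).congr_deriv ?_
  have hedge' : 1 / 2 * ∑ u, ∑ v, ω u v * (p * phiP p (g u - g v) * (e u - e v)) =
      p * ∑ u, (∑ v, ω u v * phiP p (g u - g v)) * e u := by
    calc _ = p / 2 * ∑ u, ∑ v, ω u v * phiP p (g u - g v) * (e u - e v) := by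
          simp only [Finset.mul_sum]
          exact Finset.sum_congr rfl fun u _ => Finset.sum_congr rfl fun v _ => by ring
      _ = _ := by rw [sum_sum_mul_phiP_sub_mul_sub hω p g e]; ring
  have hpot' : ∑ u, κ u * (p * phiP p (g u) * e u) = p * ∑ u, κ u * phiP p (g u) * e u := by
    rw [Finset.mul_sum]
    exact Finset.sum_congr rfl fun u _ => by ring
  rw [hedge', hpot']
  simp only [genLap, add_mul, Finset.sum_add_distrib]
  ring

end FirstVariation

section Maximizer

variable {V : Type*} [Fintype V] {ω : V → V → ℝ} {κ ϱ : V → ℝ} {p : ℝ}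

open Filter Topology in
theorem sum_genLap_mul_eq_of_forall_rayleigh_le (hω : ∀ u v, ω u v = ω v u)
    (hϱ : ∀ u, 0 < ϱ u) (hp : 1 < p) {g : V → ℝ} (hg : g ≠ 0)
    (hmax : ∀ f, f ≠ 0 → rayleigh ω κ ϱ p f ≤ rayleigh ω κ ϱ p g) (e : V → ℝ) :
    ∑ u, genLap ω κ p g u * e u = rayleigh ω κ ϱ p g * ∑ u, ϱ u * phiP p (g u) * e u := by
  have hM : pMass ϱ p (g + (0 : ℝ) • e) ≠ 0 := by simpa using (pMass_pos hϱ p hg).ne'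
  have hloc : IsLocalMax (fun t : ℝ => pEnergy ω κ p (g + t • e) / pMass ϱ p (g + t • e)) 0 := by
    have hne : ∀ᶠ t in 𝓝 (0 : ℝ), g + t • e ≠ 0 := by
      have hcont : Continuous fun t : ℝ => g + t • e := by fun_prop
      exact (hcont.tendsto 0).eventually_ne (by simpa using hg)
    filter_upwards [hne] with t ht
    simpa [rayleigh_eq_div] using hmax _ ht
  have hcrit := hloc.hasDerivAt_eq_zero
    ((hasDerivAt_pEnergy hω κ hp g e).div (hasDerivAt_pMass ϱ hp g e) hM)
  rw [div_eq_zero_iff, or_iff_left (pow_ne_zero 2 hM)] at hcrit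
  simp only [zero_smul, add_zero] at hcrit hM
  rw [rayleigh_eq_div, div_mul_eq_mul_div, eq_div_iff hM]
  have hp0 : p ≠ 0 := by linarith
  apply mul_left_cancel₀ hp0
  linear_combination hcrit

theorem isEigenpair_of_forall_rayleigh_le (hω : ∀ u v, ω u v = ω v u)
    (hϱ : ∀ u, 0 < ϱ u) (hp : 1 < p) {g : V → ℝ} (hg : g ≠ 0)
    (hmax : ∀ f, f ≠ 0 → rayleigh ω κ ϱ p f ≤ rayleigh ω κ ϱ p g) :
    IsEigenpair ω κ ϱ p (rayleigh ω κ ϱ p g) g := by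
  classical
  refine ⟨hg, fun u => ?_⟩
  simpa [Pi.single_apply] using
    sum_genLap_mul_eq_of_forall_rayleigh_le hω hϱ hp hg hmax (Pi.single u 1)

end Maximizer

theorem SimpleGraph.Reachable.imp_of_forall_adj {V : Type*} {G : SimpleGraph V} {P : V → Prop}
    (hP : ∀ a b, G.Adj a b → P a → P b) {a b : V} (h : G.Reachable a b) (ha : P a) : P b := by
  obtain ⟨w⟩ := h
  induction w with
  | nil => exact ha
  | cons hadj _ ih => exact ih (hP _ _ hadj ha)

theorem SimpleGraph.connectedComponentMk_injective_iff {V : Type*} (H : SimpleGraph V) :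
    Function.Injective H.connectedComponentMk ↔ H = ⊥ := by
  refine ⟨fun hinj => ?_, fun hbot u v huv => ?_⟩
  · ext u v
    exact ⟨fun hadj => hadj.ne (hinj (SimpleGraph.ConnectedComponent.sound hadj.reachable)),
      False.elim⟩
  · have hreach := SimpleGraph.ConnectedComponent.exact huv
    rwa [hbot, SimpleGraph.reachable_bot] at hreach

theorem posGraph_eq_bot_iff {V : Type*} (G : SimpleGraph V) (f : V → ℝ) :
    posGraph G f = ⊥ ↔ ∀ u v, G.Adj u v → f u * f v ≤ 0 := by
  simp only [SimpleGraph.ext_iff, funext_iff, posGraph, SimpleGraph.bot_adj, eq_iff_iff,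
    iff_false, not_and, not_lt]

theorem nodalCount_eq_card_iff {V : Type*} [Fintype V] (G : SimpleGraph V) (f : V → ℝ) :
    nodalCount G f = Fintype.card V ↔ (∀ u, f u ≠ 0) ∧ ∀ u v, G.Adj u v → f u * f v < 0 := by
  set H := posGraph G f
  have hsurj : Function.Surjective H.connectedComponentMk := fun c => c.exists_rep
  have hcard : Nat.card H.ConnectedComponent ≤ Fintype.card V :=
    Nat.card_eq_fintype_card (α := V) ▸ Nat.card_le_card_of_surjective _ hsurj
  constructor
  · intro hn
    have hall : {c : H.ConnectedComponent |
        ∀ u, H.connectedComponentMk u = c → f u ≠ 0} = Set.univ :=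
      Set.eq_of_subset_of_ncard_le (Set.subset_univ _)
        (by rw [Set.ncard_univ]; exact hcard.trans_eq hn.symm) Set.finite_univ
    have hnz : ∀ u, f u ≠ 0 := fun u => (hall ▸ Set.mem_univ (H.connectedComponentMk u)) u rfl
    have hbot : H = ⊥ := by
      rw [← SimpleGraph.connectedComponentMk_injective_iff]
      refine (hsurj.bijective_of_nat_card_le ?_).injective
      rw [Nat.card_eq_fintype_card, ← hn, ← Set.ncard_univ]
      exact Set.ncard_le_ncard (Set.subset_univ _)
    exact ⟨hnz, fun u v huv => ((posGraph_eq_bot_iff G f).mp hbot u v huv).lt_of_ne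
      (mul_ne_zero (hnz u) (hnz v))⟩
  · rintro ⟨hnz, hneg⟩
    have hbij : Function.Bijective H.connectedComponentMk :=
      ⟨(SimpleGraph.connectedComponentMk_injective_iff H).mpr
        ((posGraph_eq_bot_iff G f).mpr fun u v huv => (hneg u v huv).le), hsurj⟩
    have hall : {c : H.ConnectedComponent |
        ∀ u, H.connectedComponentMk u = c → f u ≠ 0} = Set.univ :=
      Set.eq_univ_of_forall fun _ u _ => hnz u
    rw [nodalCount, hall, Set.ncard_univ, ← Nat.card_eq_of_bijective _ hbij,
      Nat.card_eq_fintype_card]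

section SignFlip

variable {V : Type*} {G : SimpleGraph V} {σ : V → ℝ}

theorem exists_sign_flip_of_bipartition {S : Set V}
    (hS : ∀ u v, G.Adj u v → (u ∈ S ↔ v ∉ S)) :
    ∃ σ : V → ℝ, (∀ u, |σ u| = 1) ∧ ∀ u v, G.Adj u v → σ v = -σ u := by
  classical
  refine ⟨fun u => if u ∈ S then 1 else -1, fun u => by dsimp only; split_ifs <;> simp,
    fun u v huv => ?_⟩
  by_cases hu : u ∈ S
  · simp [hu, (hS u v huv).mp hu]
  · simp [hu, not_not.mp (mt (hS u v huv).mpr hu)]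

theorem abs_sub_le_abs_sign_mul_abs_sub (hflip : ∀ u v, G.Adj u v → σ v = -σ u)
    (hσ : ∀ u, |σ u| = 1) (f : V → ℝ) {u v : V} (huv : G.Adj u v) :
    |f u - f v| ≤ |σ u * (|f u|) - σ v * (|f v|)| := by
  rw [hflip u v huv, show σ u * |f u| - -σ u * |f v| = σ u * (|f u| + |f v|) by ring, abs_mul,
    hσ, one_mul, abs_of_nonneg (add_nonneg (abs_nonneg (f u)) (abs_nonneg (f v)))]
  exact abs_sub _ _

variable [Fintype V] {ω : V → V → ℝ} {κ ϱ : V → ℝ} {p : ℝ}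

theorem rayleigh_le_rayleigh_sign_mul_abs (hω : ∀ u v, 0 ≤ ω u v)
    (hωzero : ∀ u v, ¬G.Adj u v → ω u v = 0) (hϱ : ∀ u, 0 ≤ ϱ u) (hp : 0 ≤ p)
    (hσ : ∀ u, |σ u| = 1) (hflip : ∀ u v, G.Adj u v → σ v = -σ u) (f : V → ℝ) :
    rayleigh ω κ ϱ p f ≤ rayleigh ω κ ϱ p (fun u => σ u * |f u|) := by
  have habs : ∀ u, |σ u * (|f u|)| = |f u| := fun u => by rw [abs_mul, hσ, one_mul, abs_abs]
  rw [rayleigh_eq_div, rayleigh_eq_div]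
  have hmass : pMass ϱ p (fun u => σ u * |f u|) = pMass ϱ p f := by simp only [pMass, habs]
  rw [hmass]
  refine div_le_div_of_nonneg_right ?_
    (Finset.sum_nonneg fun u _ => mul_nonneg (hϱ u) (by positivity))
  have hedge : ∀ u v, ω u v * |f u - f v| ^ p ≤ ω u v * |σ u * (|f u|) - σ v * (|f v|)| ^ p := by
    intro u v
    by_cases huv : G.Adj u v
    · exact mul_le_mul_of_nonneg_left (Real.rpow_le_rpow (abs_nonneg _)
        (abs_sub_le_abs_sign_mul_abs_sub hflip hσ f huv) hp) (hω u v)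
    · simp [hωzero u v huv]
  have hsum := Finset.sum_le_sum fun u (_ : u ∈ Finset.univ) =>
    Finset.sum_le_sum fun v (_ : v ∈ Finset.univ) => hedge u v
  simp only [pEnergy, habs]
  linarith

theorem genLap_sign_mul_of_eq_zero (hωzero : ∀ u v, ¬G.Adj u v → ω u v = 0)
    (hσ : ∀ u, |σ u| = 1) (hflip : ∀ u v, G.Adj u v → σ v = -σ u) {h : V → ℝ} {a : V}
    (ha : h a = 0) :
    genLap ω κ p (fun u => σ u * h u) a = σ a * ∑ v, ω a v * phiP p (h v) := by
  simp only [genLap, ha, mul_zero, zero_sub, phiP_zero, add_zero, Finset.mul_sum]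
  refine Finset.sum_congr rfl fun v _ => ?_
  by_cases hav : G.Adj a v
  · rw [hflip a v hav, neg_mul, neg_neg, phiP_mul_of_abs_eq_one p (hσ a)]
    ring
  · simp [hωzero a v hav]

theorem eq_zero_of_adj_of_isEigenpair_sign_mul_abs (hωpos : ∀ u v, G.Adj u v → 0 < ω u v)
    (hωzero : ∀ u v, ¬G.Adj u v → ω u v = 0) (hσ : ∀ u, |σ u| = 1)
    (hflip : ∀ u v, G.Adj u v → σ v = -σ u) {lam : ℝ} {f : V → ℝ}
    (heig : IsEigenpair ω κ ϱ p lam (fun u => σ u * |f u|)) {a b : V} (hab : G.Adj a b)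
    (ha : f a = 0) : f b = 0 := by
  have hsum : ∑ v, ω a v * phiP p |f v| = 0 := by
    have h := heig.2 a
    beta_reduce at h
    rw [genLap_sign_mul_of_eq_zero hωzero hσ hflip (h := fun u => |f u|) (by simp [ha]), ha,
      abs_zero, mul_zero, phiP_zero, mul_zero, mul_zero] at h
    exact (mul_eq_zero.mp h).resolve_left (by simp [← abs_ne_zero, hσ a])
  have hnonneg : ∀ v ∈ Finset.univ, 0 ≤ ω a v * phiP p |f v| := fun v _ => by
    by_cases hav : G.Adj a v
    · exact mul_nonneg (hωpos a v hav).le (phiP_nonneg p (abs_nonneg _))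
    · simp [hωzero a v hav]
  have hb := (Finset.sum_eq_zero_iff_of_nonneg hnonneg).mp hsum b (Finset.mem_univ b)
  rw [mul_eq_zero, or_iff_right (hωpos a b hab).ne', phiP_eq_zero_iff, abs_eq_zero] at hb
  exact hb

theorem ne_zero_of_isEigenpair_sign_mul_abs (hωpos : ∀ u v, G.Adj u v → 0 < ω u v)
    (hωzero : ∀ u v, ¬G.Adj u v → ω u v = 0) (hσ : ∀ u, |σ u| = 1)
    (hflip : ∀ u v, G.Adj u v → σ v = -σ u) (hconn : G.Connected) {lam : ℝ} {f : V → ℝ}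
    (hf : f ≠ 0) (heig : IsEigenpair ω κ ϱ p lam (fun u => σ u * |f u|)) (u : V) : f u ≠ 0 :=
  fun hu => hf <| funext fun w => (hconn.preconnected u w).imp_of_forall_adj
    (fun _ _ hab ha => eq_zero_of_adj_of_isEigenpair_sign_mul_abs hωpos hωzero hσ hflip heig hab ha)
    hu

theorem nodalCount_sign_mul_abs_eq_card (hσ : ∀ u, |σ u| = 1)
    (hflip : ∀ u v, G.Adj u v → σ v = -σ u) {f : V → ℝ} (hf : ∀ u, f u ≠ 0) :
    nodalCount G (fun u => σ u * |f u|) = Fintype.card V := by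
  have hσσ : ∀ u, σ u * σ u = 1 := fun u => by rw [← abs_mul_abs_self, hσ, one_mul]
  refine (nodalCount_eq_card_iff G _).mpr ⟨fun u => ?_, fun u v huv => ?_⟩
  · exact mul_ne_zero (by simp [← abs_ne_zero, hσ]) (abs_ne_zero.mpr (hf u))
  · rw [hflip u v huv, show σ u * |f u| * (-σ u * |f v|) = -(σ u * σ u) * (|f u| * |f v|) by ring,
      hσσ]
    exact mul_neg_of_neg_of_pos (by norm_num) (mul_pos (abs_pos.mpr (hf u)) (abs_pos.mpr (hf v)))

end SignFlip

/-- a connected graph is bipartite iff some eigenfunction of the largest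
variational eigenvalue `λ_N = max_{f ∈ 𝒮_p} ℛ(f)` induces exactly `N` nodal domains. -/
theorem stmt5 {V : Type*} [Fintype V]
    (G : SimpleGraph V) (ω : V → V → ℝ) (κ ϱ : V → ℝ) (p : ℝ) (hp : 1 < p)
    (hωsymm : ∀ u v, ω u v = ω v u)
    (hωpos : ∀ u v, G.Adj u v → 0 < ω u v)
    (hωzero : ∀ u v, ¬ G.Adj u v → ω u v = 0)
    (hϱpos : ∀ u, 0 < ϱ u)
    (hconn : G.Connected)
    (lamN : ℝ) (hlamN : IsGreatest (rayleigh ω κ ϱ p '' pSphere V p) lamN) :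
    (∃ S : Set V, ∀ u v, G.Adj u v → (u ∈ S ↔ v ∉ S)) ↔
      ∃ f : V → ℝ, IsEigenpair ω κ ϱ p lamN f ∧ nodalCount G f = Fintype.card V := by
  have hp0 : 0 < p := by linarith
  constructor
  · rintro ⟨S, hS⟩
    obtain ⟨σ, hσ, hflip⟩ := exists_sign_flip_of_bipartition hS
    obtain ⟨f, hf, rfl⟩ := hlamN.1
    have hω : ∀ u v, 0 ≤ ω u v := fun u v =>
      (em (G.Adj u v)).elim (fun h => (hωpos u v h).le) fun h => (hωzero u v h).ge
    have hg : (fun u => σ u * |f u|) ∈ pSphere V p := by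
      simpa [pSphere, abs_mul, hσ] using hf
    have hRg : rayleigh ω κ ϱ p (fun u => σ u * |f u|) = rayleigh ω κ ϱ p f :=
      le_antisymm (hlamN.2 ⟨_, hg, rfl⟩) (rayleigh_le_rayleigh_sign_mul_abs hω hωzero
        (fun u => (hϱpos u).le) hp0.le hσ hflip f)
    have heig : IsEigenpair ω κ ϱ p (rayleigh ω κ ϱ p f) (fun u => σ u * |f u|) :=
      hRg ▸ isEigenpair_of_forall_rayleigh_le hωsymm hϱpos hp (ne_zero_of_mem_pSphere hp0 hg)
        fun _ hf' => hRg ▸ rayleigh_le_of_isGreatest hp0 hlamN hf'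
    exact ⟨_, heig, nodalCount_sign_mul_abs_eq_card hσ hflip
      (ne_zero_of_isEigenpair_sign_mul_abs hωpos hωzero hσ hflip hconn
        (ne_zero_of_mem_pSphere hp0 hf) heig)⟩
  · rintro ⟨f, -, hf⟩
    refine ⟨{u | 0 < f u}, fun u v huv => ?_⟩
    rcases mul_neg_iff.mp (((nodalCount_eq_card_iff G f).mp hf).2 u v huv) with ⟨hu, hv⟩ | ⟨hu, hv⟩
    · simp [hu, hv.le]
    · simp [hu.le, hv]
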